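/- Let n ≥ 1, let Y be a C¹ vector field on ℝⁿ with compact support, let u be a C¹ real-valued function and v a C² real-valued function defined on a neighborhood of the support of Y. Then −2 ∫ v e^{2u} S(Y)(∇v, ∇v) ⟨∇v, Y⟩ dx = ∫ e^{2u} ⟨∇v, Y⟩ [ ⟨∇v, Y⟩ (|∇v|² + vΔv + 2v⟨∇v, ∇u⟩) + 2v · Hess v(Y, ∇v) ] dx. -/

import Mathlib

/-!
Integrate the divergence of the vector field `F = v e^{2u} ⟨∇v, Y⟩² ∇v` (`weightedFlux`),
which is `C¹` with compact support inside the support of `Y`, so `∫ div F = 0`.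
By the product rule, with `g = ⟨∇v, Y⟩`,
`div F = e^{2u} g² (|∇v|² + v Δv + 2v ⟨∇v, ∇u⟩) + 2v e^{2u} g ⟨∇g, ∇v⟩`,
and `⟨∇g, ∇v⟩ = S(Y)(∇v, ∇v) + Hess v(Y, ∇v)` by the symmetry of `Hess v`.
Integrated, the `S(Y)` term gives minus the left-hand side and the other terms the right-hand side.
-/

open MeasureTheory Real

/-- The `i`-th partial derivative of a function on `ℝⁿ`. -/
noncomputable def pd (n : ℕ) (f : EuclideanSpace ℝ (Fin n) → ℝ)
    (i : Fin n) (x : EuclideanSpace ℝ (Fin n)) : ℝ :=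
  fderiv ℝ f x (EuclideanSpace.single i 1)

/-- The squared Euclidean norm of the gradient, `|∇f|² = Σᵢ (∂ᵢf)²`. -/
noncomputable def gradSq (n : ℕ) (f : EuclideanSpace ℝ (Fin n) → ℝ)
    (x : EuclideanSpace ℝ (Fin n)) : ℝ :=
  ∑ i, (pd n f i x) ^ 2

/-- The Euclidean Laplacian, `Δf = Σᵢ ∂ᵢ²f`. -/
noncomputable def lap (n : ℕ) (f : EuclideanSpace ℝ (Fin n) → ℝ)
    (x : EuclideanSpace ℝ (Fin n)) : ℝ :=
  ∑ i, pd n (pd n f i) i x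

/-- The partial derivative `∂ᵢYⱼ` of a vector field `Y` on `ℝⁿ`. -/
noncomputable def vpd (n : ℕ)
    (Y : EuclideanSpace ℝ (Fin n) → EuclideanSpace ℝ (Fin n))
    (i j : Fin n) (x : EuclideanSpace ℝ (Fin n)) : ℝ :=
  fderiv ℝ (fun y => Y y j) x (EuclideanSpace.single i 1)

/-- The symmetrized gradient `S(Y)ᵢⱼ = (∂ᵢYⱼ + ∂ⱼYᵢ)/2` of a vector field. -/
noncomputable def symGrad (n : ℕ)
    (Y : EuclideanSpace ℝ (Fin n) → EuclideanSpace ℝ (Fin n))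
    (i j : Fin n) (x : EuclideanSpace ℝ (Fin n)) : ℝ :=
  (vpd n Y i j x + vpd n Y j i x) / 2

/-- The divergence `div Y = Σᵢ ∂ᵢYᵢ` of a vector field on `ℝⁿ`. -/
noncomputable def diverg (n : ℕ)
    (Y : EuclideanSpace ℝ (Fin n) → EuclideanSpace ℝ (Fin n))
    (x : EuclideanSpace ℝ (Fin n)) : ℝ :=
  ∑ i, vpd n Y i i x

lemma tsupport_subset_tsupport_of_eq_zero {α β γ : Type*} [TopologicalSpace α] [Zero β]
    [Zero γ] {f : α → β} {g : α → γ} (h : ∀ x, g x = 0 → f x = 0) :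
    tsupport f ⊆ tsupport g :=
  closure_mono fun x hfx hgx => hfx (h x hgx)

lemma ContDiffOn.contDiff_of_tsupport_subset {𝕜 E F : Type*} [NontriviallyNormedField 𝕜]
    [NormedAddCommGroup E] [NormedSpace 𝕜 E] [NormedAddCommGroup F] [NormedSpace 𝕜 F]
    {k : WithTop ℕ∞} {f : E → F} {s : Set E} (hf : ContDiffOn 𝕜 k f s) (hs : IsOpen s)
    (hfs : tsupport f ⊆ s) : ContDiff 𝕜 k f := by
  refine contDiff_iff_contDiffAt.2 fun x => ?_
  by_cases hx : x ∈ tsupport f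
  · exact hf.contDiffAt (hs.mem_nhds (hfs hx))
  · exact contDiffAt_const.congr_of_eventuallyEq (notMem_tsupport_iff_eventuallyEq.1 hx)

lemma integrable_of_continuousOn_of_eq_zero {E β : Type*} [TopologicalSpace E] [MeasurableSpace E]
    [OpensMeasurableSpace E] {μ : Measure E} [IsFiniteMeasureOnCompacts μ] [Zero β]
    {Ω : Set E} {g : E → β} {f : E → ℝ} (hΩ : IsOpen Ω) (hg : HasCompactSupport g)
    (hgΩ : tsupport g ⊆ Ω) (hf : ContinuousOn f Ω) (h : ∀ x, g x = 0 → f x = 0) :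
    Integrable f μ :=
  have hfg := tsupport_subset_tsupport_of_eq_zero h
  (hf.continuous_of_tsupport_subset hΩ (hfg.trans hgΩ)).integrable_of_hasCompactSupport
    (hg.of_isClosed_subset (isClosed_tsupport f) hfg)

lemma ContDiff.integrable_fderiv_apply {E : Type*} [NormedAddCommGroup E] [NormedSpace ℝ E]
    [MeasurableSpace E] [OpensMeasurableSpace E] {μ : Measure E} [IsFiniteMeasureOnCompacts μ]
    {f : E → ℝ} (hf : ContDiff ℝ 1 f) (hs : HasCompactSupport f) (w : E) :
    Integrable (fun x => fderiv ℝ f x w) μ :=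
  ((hf.continuous_fderiv one_ne_zero).clm_apply continuous_const).integrable_of_hasCompactSupport
    (hs.fderiv_apply (𝕜 := ℝ) w)

lemma integral_fderiv_apply_eq_zero {E : Type*} [NormedAddCommGroup E] [NormedSpace ℝ E]
    [FiniteDimensional ℝ E] [MeasurableSpace E] [BorelSpace E] {μ : Measure E}
    [μ.IsAddHaarMeasure] {f : E → ℝ} (hf : ContDiff ℝ 1 f) (hs : HasCompactSupport f)
    (w : E) :
    ∫ x, fderiv ℝ f x w ∂μ = 0 := by
  simpa using integral_mul_fderiv_eq_neg_fderiv_mul_of_integrable (μ := μ)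
    (f := fun _ => (1 : ℝ)) (g := f) (v := w) (by simp)
    (by simpa using hf.integrable_fderiv_apply hs w)
    (by simpa using hf.continuous.integrable_of_hasCompactSupport hs)
    (fun x _ => differentiableAt_const 1) (fun x _ => hf.differentiable one_ne_zero x)

section PartialDerivatives

variable {n : ℕ} {f g : EuclideanSpace ℝ (Fin n) → ℝ} {x : EuclideanSpace ℝ (Fin n)}

lemma ContDiffOn.pd {k m : WithTop ℕ∞} {Ω : Set (EuclideanSpace ℝ (Fin n))}
    (hf : ContDiffOn ℝ m f Ω) (hΩ : IsOpen Ω) (hkm : k + 1 ≤ m) (i : Fin n) :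
    ContDiffOn ℝ k (pd n f i) Ω :=
  (hf.fderiv_of_isOpen hΩ hkm).clm_apply contDiffOn_const

lemma ContDiffAt.differentiableAt_pd (hf : ContDiffAt ℝ 2 f x) (i : Fin n) :
    DifferentiableAt ℝ (pd n f i) x :=
  ((hf.fderiv_right (m := 1) le_rfl).differentiableAt one_ne_zero).clm_apply
    (differentiableAt_const _)

lemma continuous_symGrad {Y : EuclideanSpace ℝ (Fin n) → EuclideanSpace ℝ (Fin n)}
    (hY : ContDiff ℝ 1 Y) (i j : Fin n) : Continuous (symGrad n Y i j) := by
  have hvpd (i j : Fin n) : Continuous (vpd n Y i j) :=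
    (((EuclideanSpace.proj j).contDiff.comp hY).continuous_fderiv one_ne_zero).clm_apply
      continuous_const
  unfold symGrad
  fun_prop

lemma integral_sum_pd_eq_zero {F : Fin n → EuclideanSpace ℝ (Fin n) → ℝ}
    (hF : ∀ i, ContDiff ℝ 1 (F i)) (hFs : ∀ i, HasCompactSupport (F i)) :
    ∫ x, ∑ i, pd n (F i) i x = 0 := by
  simp only [pd]
  rw [integral_finsetSum _ fun i _ => (hF i).integrable_fderiv_apply (hFs i) _]
  exact Finset.sum_eq_zero fun i _ => integral_fderiv_apply_eq_zero (hF i) (hFs i) _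

lemma pd_mul (hf : DifferentiableAt ℝ f x) (hg : DifferentiableAt ℝ g x) (i : Fin n) :
    pd n (fun y => f y * g y) i x = pd n f i x * g x + f x * pd n g i x := by
  simp only [pd, fderiv_fun_mul hf hg, add_apply, smul_apply, smul_eq_mul]
  ring

lemma pd_sum {ι : Type*} (s : Finset ι) {φ : ι → EuclideanSpace ℝ (Fin n) → ℝ}
    (hφ : ∀ j ∈ s, DifferentiableAt ℝ (φ j) x) (i : Fin n) :
    pd n (fun y => ∑ j ∈ s, φ j y) i x = ∑ j ∈ s, pd n (φ j) i x := by
  simp only [pd, fderiv_fun_sum hφ, FunLike.coe_sum, Finset.sum_apply]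

lemma pd_pd_comm (hf : ContDiffAt ℝ 2 f x) (i j : Fin n) :
    pd n (pd n f j) i x = pd n (pd n f i) j x := by
  have hd : DifferentiableAt ℝ (fderiv ℝ f) x :=
    (hf.fderiv_right (m := 1) le_rfl).differentiableAt one_ne_zero
  have hsymm := hf.isSymmSndFDerivAt (by simp [minSmoothness_of_isRCLikeNormedField])
  unfold pd
  simp only [fderiv_clm_apply hd (differentiableAt_const _)]
  simpa using hsymm (EuclideanSpace.single i 1) (EuclideanSpace.single j 1)

lemma sum_pd_mul_pd (hg : DifferentiableAt ℝ g x) (hf : ContDiffAt ℝ 2 f x) :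
    ∑ i, pd n (fun y => g y * pd n f i y) i x
      = ∑ i, pd n g i x * pd n f i x + g x * lap n f x := by
  simp only [pd_mul hg (hf.differentiableAt_pd _), lap, Finset.sum_add_distrib, Finset.mul_sum]

lemma sum_pd_sum_pd_mul_mul_pd {Y : EuclideanSpace ℝ (Fin n) → EuclideanSpace ℝ (Fin n)}
    (hf : ContDiffAt ℝ 2 f x) (hY : DifferentiableAt ℝ Y x) :
    ∑ i, pd n (fun y => ∑ j, pd n f j y * Y y j) i x * pd n f i x
      = ∑ i, ∑ j, symGrad n Y i j x * pd n f i x * pd n f j x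
        + ∑ i, ∑ j, Y x i * pd n (pd n f j) i x * pd n f j x := by
  have hYj (j : Fin n) : DifferentiableAt ℝ (fun y => Y y j) x := by fun_prop
  have hgrad (i : Fin n) : pd n (fun y => ∑ j, pd n f j y * Y y j) i x
      = ∑ j, (pd n (pd n f j) i x * Y x j + pd n f j x * vpd n Y i j x) := by
    rw [pd_sum _ fun j _ => (hf.differentiableAt_pd j).fun_mul (hYj j)]
    exact Finset.sum_congr rfl fun j _ => pd_mul (hf.differentiableAt_pd j) (hYj j) i
  have hsym : ∑ i, ∑ j, symGrad n Y i j x * pd n f i x * pd n f j x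
      = ∑ i, ∑ j, pd n f j x * vpd n Y i j x * pd n f i x := by
    have hswap : ∑ i, ∑ j, vpd n Y j i x * pd n f i x * pd n f j x
        = ∑ i, ∑ j, vpd n Y i j x * pd n f i x * pd n f j x := Finset.sum_comm.trans
      (Finset.sum_congr rfl fun i _ => Finset.sum_congr rfl fun j _ => by ring)
    have hsplit : ∑ i, ∑ j, symGrad n Y i j x * pd n f i x * pd n f j x
        = (∑ i, ∑ j, vpd n Y i j x * pd n f i x * pd n f j x
          + ∑ i, ∑ j, vpd n Y j i x * pd n f i x * pd n f j x) / 2 := by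
      simp only [symGrad, Finset.sum_div, ← Finset.sum_add_distrib]
      exact Finset.sum_congr rfl fun i _ => Finset.sum_congr rfl fun j _ => by ring
    rw [hsplit, hswap, add_self_div_two]
    exact Finset.sum_congr rfl fun i _ => Finset.sum_congr rfl fun j _ => by ring
  have hhess : ∑ i, ∑ j, pd n (pd n f j) i x * Y x j * pd n f i x
      = ∑ i, ∑ j, Y x i * pd n (pd n f j) i x * pd n f j x := Finset.sum_comm.trans
    (Finset.sum_congr rfl fun i _ => Finset.sum_congr rfl fun j _ => by
      rw [pd_pd_comm hf i j]; ring)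
  simp only [hgrad, hsym, ← hhess, Finset.sum_mul, add_mul, Finset.sum_add_distrib, add_comm]

end PartialDerivatives

section WeightedFlux

variable {n : ℕ} {u v : EuclideanSpace ℝ (Fin n) → ℝ}
  {Y : EuclideanSpace ℝ (Fin n) → EuclideanSpace ℝ (Fin n)}

noncomputable def weightedFlux (n : ℕ) (u v : EuclideanSpace ℝ (Fin n) → ℝ)
    (Y : EuclideanSpace ℝ (Fin n) → EuclideanSpace ℝ (Fin n)) (i : Fin n)
    (y : EuclideanSpace ℝ (Fin n)) : ℝ :=
  v y * exp (2 * u y) * (∑ j, pd n v j y * Y y j) ^ 2 * pd n v i y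

lemma tsupport_weightedFlux_subset (i : Fin n) : tsupport (weightedFlux n u v Y i) ⊆ tsupport Y :=
  tsupport_subset_tsupport_of_eq_zero fun y hy => by simp [weightedFlux, hy]

lemma contDiff_weightedFlux {Ω : Set (EuclideanSpace ℝ (Fin n))} (hΩ : IsOpen Ω)
    (hY : ContDiff ℝ 1 Y) (hYΩ : tsupport Y ⊆ Ω) (hu : ContDiffOn ℝ 1 u Ω)
    (hv : ContDiffOn ℝ 2 v Ω) (i : Fin n) : ContDiff ℝ 1 (weightedFlux n u v Y i) := by
  have hv1 : ContDiffOn ℝ 1 v Ω := hv.of_le one_le_two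
  have hpdv (j : Fin n) : ContDiffOn ℝ 1 (pd n v j) Ω := hv.pd hΩ (by norm_num) j
  exact ContDiffOn.contDiff_of_tsupport_subset (by unfold weightedFlux; fun_prop) hΩ
    ((tsupport_weightedFlux_subset i).trans hYΩ)

variable {x : EuclideanSpace ℝ (Fin n)}

lemma sum_pd_weightedFlux (hu : DifferentiableAt ℝ u x) (hv : ContDiffAt ℝ 2 v x)
    (hY : DifferentiableAt ℝ Y x) :
    ∑ i, pd n (weightedFlux n u v Y i) i x
      = exp (2 * u x) * (∑ i, pd n v i x * Y x i) *
          ((∑ i, pd n v i x * Y x i) *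
              (gradSq n v x + v x * lap n v x + 2 * v x * (∑ i, pd n v i x * pd n u i x)) +
            2 * v x * (∑ i, ∑ j, Y x i * pd n (pd n v j) i x * pd n v j x))
        + 2 * (v x * exp (2 * u x) * (∑ i, ∑ j, symGrad n Y i j x * pd n v i x * pd n v j x) *
          (∑ i, pd n v i x * Y x i)) := by
  have hg : DifferentiableAt ℝ (fun y => ∑ j, pd n v j y * Y y j) x := by
    have := hv.differentiableAt_pd
    fun_prop
  have hw :
      DifferentiableAt ℝ (fun y => v y * exp (2 * u y) * (∑ j, pd n v j y * Y y j) ^ 2) x := by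
    have := hv.differentiableAt two_ne_zero
    fun_prop
  have hpdw (i : Fin n) : pd n (fun y => v y * exp (2 * u y) * (∑ j, pd n v j y * Y y j) ^ 2) i x
      = exp (2 * u x) * (∑ j, pd n v j x * Y x j) ^ 2 * pd n v i x
        + 2 * v x * exp (2 * u x) * (∑ j, pd n v j x * Y x j) ^ 2 * pd n u i x
        + 2 * v x * exp (2 * u x) * (∑ j, pd n v j x * Y x j) *
            pd n (fun y => ∑ j, pd n v j y * Y y j) i x := by
    rw [pd, (((hv.differentiableAt two_ne_zero).hasFDerivAt.fun_mul
      (hu.hasFDerivAt.const_mul 2).exp).fun_mul (hg.hasFDerivAt.pow 2)).fderiv]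
    simp only [pd, add_apply, smul_apply, smul_eq_mul]
    ring
  have hflux : ∑ i, pd n (fun y => v y * exp (2 * u y) * (∑ j, pd n v j y * Y y j) ^ 2) i x
        * pd n v i x
      = exp (2 * u x) * (∑ j, pd n v j x * Y x j) ^ 2 * gradSq n v x
        + 2 * v x * exp (2 * u x) * (∑ j, pd n v j x * Y x j) ^ 2 *
            (∑ i, pd n v i x * pd n u i x)
        + 2 * v x * exp (2 * u x) * (∑ j, pd n v j x * Y x j) *
            (∑ i, ∑ j, symGrad n Y i j x * pd n v i x * pd n v j x
              + ∑ i, ∑ j, Y x i * pd n (pd n v j) i x * pd n v j x) := by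
    rw [← sum_pd_sum_pd_mul_mul_pd hv hY]
    simp only [hpdw]
    generalize ∑ j, pd n v j x * Y x j = G
    simp only [gradSq, Finset.mul_sum, ← Finset.sum_add_distrib]
    exact Finset.sum_congr rfl fun i _ => by ring
  unfold weightedFlux
  rw [sum_pd_mul_pd hw hv, hflux]
  ring

end WeightedFlux

theorem second_weighted_identity_general (n : ℕ)
    (Ω : Set (EuclideanSpace ℝ (Fin n))) (hΩ : IsOpen Ω)
    (Y : EuclideanSpace ℝ (Fin n) → EuclideanSpace ℝ (Fin n))
    (u v : EuclideanSpace ℝ (Fin n) → ℝ)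
    (hY : ContDiff ℝ 1 Y) (hsupp : HasCompactSupport Y) (hYΩ : tsupport Y ⊆ Ω)
    (hu : ContDiffOn ℝ 1 u Ω) (hv : ContDiffOn ℝ 2 v Ω) :
    -2 * ∫ x : EuclideanSpace ℝ (Fin n),
        v x * Real.exp (2 * u x) *
          (∑ i, ∑ j, symGrad n Y i j x * pd n v i x * pd n v j x) *
          (∑ i, pd n v i x * Y x i)
    = ∫ x : EuclideanSpace ℝ (Fin n),
        Real.exp (2 * u x) * (∑ i, pd n v i x * Y x i) *
          ((∑ i, pd n v i x * Y x i) *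
              (gradSq n v x + v x * lap n v x +
                2 * v x * (∑ i, pd n v i x * pd n u i x)) +
            2 * v x * (∑ i, ∑ j, Y x i * pd n (pd n v j) i x * pd n v j x)) := by
  have hdiv : ∫ x, ∑ i, pd n (weightedFlux n u v Y i) i x = 0 :=
    integral_sum_pd_eq_zero (contDiff_weightedFlux hΩ hY hYΩ hu hv) fun i =>
      hsupp.of_isClosed_subset (isClosed_tsupport _) (tsupport_weightedFlux_subset i)
  rw [← integral_const_mul, eq_comm, ← sub_eq_zero, ← integral_sub ?_ ?_]
  · refine (integral_congr_ae (.of_forall fun x => ?_)).trans hdiv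
    by_cases hx : x ∈ Ω
    · have hΩx := hΩ.mem_nhds hx
      rw [sum_pd_weightedFlux ((hu.contDiffAt hΩx).differentiableAt one_ne_zero)
        (hv.contDiffAt hΩx) (hY.differentiable one_ne_zero x)]
      ring
    · have hxY : x ∉ tsupport Y := fun h => hx (hYΩ h)
      simp [pd, fderiv_of_notMem_tsupport ℝ (fun h => hxY (tsupport_weightedFlux_subset _ h)),
        image_eq_zero_of_notMem_tsupport hxY]
  all_goals
    refine integrable_of_continuousOn_of_eq_zero hΩ hsupp hYΩ ?_ fun x hx => by simp [hx]
    have hv0 : ContDiffOn ℝ 0 v Ω := hv.of_le (by norm_num)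
    have hu0 : ContDiffOn ℝ 0 u Ω := hu.of_le (by norm_num)
    have hY0 : ContDiffOn ℝ 0 Y Ω := (hY.of_le (by norm_num)).contDiffOn
    have hpdv (j : Fin n) : ContDiffOn ℝ 0 (pd n v j) Ω := hv.pd hΩ (by norm_num) j
    have hpdpdv (i j : Fin n) : ContDiffOn ℝ 0 (pd n (pd n v j) i) Ω :=
      (hv.pd (k := 1) hΩ (by norm_num) j).pd hΩ (by norm_num) i
    have hpdu (i : Fin n) : ContDiffOn ℝ 0 (pd n u i) Ω := hu.pd hΩ (by norm_num) i
    have hsymGrad (i j : Fin n) : ContDiffOn ℝ 0 (symGrad n Y i j) Ω :=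
      (contDiff_zero.2 (continuous_symGrad hY i j)).contDiffOn
    simp only [gradSq, lap]
    exact contDiffOn_zero (𝕜 := ℝ) |>.1 (by fun_prop)

/-- Flat-case second weighted identity for vector fields:
`−2∫ v e^{2u} S(Y)(∇v,∇v)⟨∇v,Y⟩ =
 ∫ e^{2u}⟨∇v,Y⟩[⟨∇v,Y⟩(|∇v|² + vΔv + 2v⟨∇v,∇u⟩) + 2v Hess v(Y,∇v)]`. -/
theorem second_weighted_identity (n : ℕ) (hn : 1 ≤ n)
    (Ω : Set (EuclideanSpace ℝ (Fin n))) (hΩ : IsOpen Ω)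
    (Y : EuclideanSpace ℝ (Fin n) → EuclideanSpace ℝ (Fin n))
    (u v : EuclideanSpace ℝ (Fin n) → ℝ)
    (hY : ContDiff ℝ 1 Y) (hsupp : HasCompactSupport Y) (hYΩ : tsupport Y ⊆ Ω)
    (hu : ContDiffOn ℝ 1 u Ω) (hv : ContDiffOn ℝ 2 v Ω) :
    -2 * ∫ x : EuclideanSpace ℝ (Fin n),
        v x * Real.exp (2 * u x) *
          (∑ i, ∑ j, symGrad n Y i j x * pd n v i x * pd n v j x) *
          (∑ i, pd n v i x * Y x i)
    = ∫ x : EuclideanSpace ℝ (Fin n),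
        Real.exp (2 * u x) * (∑ i, pd n v i x * Y x i) *
          ((∑ i, pd n v i x * Y x i) *
              (gradSq n v x + v x * lap n v x +
                2 * v x * (∑ i, pd n v i x * pd n u i x)) +
            2 * v x * (∑ i, ∑ j, Y x i * pd n (pd n v j) i x * pd n v j x)) :=
  second_weighted_identity_general n Ω hΩ Y u v hY hsupp hYΩ hu hv
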